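/- arXiv:1407.1164 — 2 statements merged into one kernel-verified Lean document; each statement's English description precedes it below -/
import Mathlib

section
/- With notation as in the greedy construction: c(p₁) ≥ … ≥ c(p_r), 0 ≤ T_min ≤ T_max pointwise, ∑_j T_min(p_j) ≤ 1 ≤ ∑_j T_max(p_j), and S* defined by S*(p₁) = min(T_max(p₁), 1 − ∑_{j≥2} T_min(p_j)), S*(p_k) = min(T_max(p_k), 1 − ∑_{j<k} S*(p_j) − ∑_{j>k} T_min(p_j)) for k ≥ 2. Then S* is feasible: T_min(p_k) ≤ S*(p_k) ≤ T_max(p_k) for all k and ∑_k S*(p_k) = 1. -/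
/-!
Cut the ordered index set just after `k`. By construction the greedy value never exceeds the
budget left once the later phases get their minimum, so the allocation up to `k` plus the minima
after `k` is at most `1`; applied at the predecessor of `k` (or, for the first phase, to
`∑ Tmin ≤ 1`) this gives `Tmin k ≤ S* k`. Dually, the allocation up to `k` plus the maxima after
`k` is at least `1`, by induction on `k`: if `S* k = Tmax k` the quantity is unchanged from the
previous cut, and otherwise it equals `1 + ∑_{j > k} (Tmax j - Tmin j)`. At the last phase the two
bounds give `∑ S* = 1`.
-/

open Finset

variable {ι : Type*} [LinearOrder ι] [LocallyFiniteOrderBot ι] [LocallyFiniteOrderTop ι]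

lemma sum_Iic_add_sum_Ioi_eq (f g : ι → ℝ) (k : ι) :
    ∑ j ∈ Iic k, f j + ∑ j ∈ Ioi k, g j = ∑ j ∈ Iio k, f j + ∑ j ∈ Ici k, g j + f k - g k := by
  rw [Iic_eq_cons_Iio, Ici_eq_cons_Ioi, sum_cons, sum_cons]
  ring

lemma sum_Iio_add_sum_Ici_eq_sum_or_exists [Fintype ι] (f g : ι → ℝ) (k : ι) :
    ∑ j ∈ Iio k, f j + ∑ j ∈ Ici k, g j = ∑ j, g j ∨
      ∃ m < k, ∑ j ∈ Iio k, f j + ∑ j ∈ Ici k, g j = ∑ j ∈ Iic m, f j + ∑ j ∈ Ioi m, g j := by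
  by_cases hk : IsMin k
  · have hIci : Ici k = univ := eq_univ_of_forall fun j ↦ mem_Ici.2 (not_lt.1 hk.not_lt)
    exact Or.inl (by rw [Iio_eq_empty.2 hk, hIci, sum_empty, zero_add])
  · obtain ⟨m, hm⟩ := exists_covBy_of_wellFoundedGT hk
    have hIio : Iio k = Iic m := by
      ext j; simpa only [mem_Iio, mem_Iic] using ⟨hm.le_of_lt, fun h ↦ h.trans_lt hm.lt⟩
    have hIci : Ici k = Ioi m := by
      ext j; simpa only [mem_Ici, mem_Ioi] using ⟨hm.lt.trans_le, hm.ge_of_gt⟩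
    exact Or.inr ⟨m, hm.lt, by rw [hIio, hIci]⟩

/-- `lo`, `hi`, `S` are the paper's `T_min`, `T_max`, `S*`. -/
def IsGreedySplit (lo hi S : ι → ℝ) : Prop :=
  ∀ k, S k = min (hi k) (1 - ∑ j ∈ Iio k, S j - ∑ j ∈ Ioi k, lo j)

namespace IsGreedySplit

variable {lo hi S : ι → ℝ}

lemma le_hi (hS : IsGreedySplit lo hi S) (k : ι) : S k ≤ hi k :=
  (hS k).trans_le (min_le_left _ _)

lemma sum_Iic_add_sum_Ioi_le_one (hS : IsGreedySplit lo hi S) (k : ι) :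
    ∑ j ∈ Iic k, S j + ∑ j ∈ Ioi k, lo j ≤ 1 := by
  have := (hS k).trans_le (min_le_right _ _)
  rw [Iic_eq_cons_Iio, sum_cons]
  linarith

lemma lo_le [Fintype ι] (hS : IsGreedySplit lo hi S) (hlohi : ∀ k, lo k ≤ hi k)
    (hlo : ∑ k, lo k ≤ 1) (k : ι) : lo k ≤ S k := by
  have hcut : ∑ j ∈ Iio k, S j + ∑ j ∈ Ici k, lo j ≤ 1 := by
    obtain h | ⟨m, -, h⟩ := sum_Iio_add_sum_Ici_eq_sum_or_exists S lo k
    · exact h ▸ hlo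
    · exact h ▸ hS.sum_Iic_add_sum_Ioi_le_one m
  rw [Ici_eq_cons_Ioi, sum_cons] at hcut
  rw [hS k]
  exact le_min (hlohi k) (by linarith)

lemma one_le_sum_Iic_add_sum_Ioi [Fintype ι] (hS : IsGreedySplit lo hi S)
    (hlohi : ∀ k, lo k ≤ hi k) (hhi : 1 ≤ ∑ k, hi k) (k : ι) :
    1 ≤ ∑ j ∈ Iic k, S j + ∑ j ∈ Ioi k, hi j := by
  induction k using WellFoundedLT.induction with
  | ind k ih =>
      rw [sum_Iic_add_sum_Ioi_eq]
      rcases min_choice (hi k) (1 - ∑ j ∈ Iio k, S j - ∑ j ∈ Ioi k, lo j) with h | h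
      · have hcut : 1 ≤ ∑ j ∈ Iio k, S j + ∑ j ∈ Ici k, hi j := by
          obtain h | ⟨m, hm, h⟩ := sum_Iio_add_sum_Ici_eq_sum_or_exists S hi k
          · exact h ▸ hhi
          · exact h ▸ ih m hm
        linarith [(hS k).trans h]
      · have hlohi' : ∑ j ∈ Ioi k, lo j ≤ ∑ j ∈ Ioi k, hi j := sum_le_sum fun j _ ↦ hlohi j
        rw [Ici_eq_cons_Ioi, sum_cons, (hS k).trans h]
        linarith

theorem sum_eq_one [Fintype ι] (hS : IsGreedySplit lo hi S) (hlohi : ∀ k, lo k ≤ hi k)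
    (hhi : 1 ≤ ∑ k, hi k) : ∑ k, S k = 1 := by
  have hne : (univ : Finset ι).Nonempty :=
    nonempty_of_sum_ne_zero (by linarith : (0 : ℝ) < ∑ k, hi k).ne'
  obtain ⟨t, -, ht⟩ := univ.exists_max_image id hne
  have hIic : Iic t = univ := eq_univ_of_forall fun j ↦ mem_Iic.2 (ht j (mem_univ j))
  have hIoi : Ioi t = ∅ := Ioi_eq_empty.2 fun j _ ↦ ht j (mem_univ j)
  have hle := hS.sum_Iic_add_sum_Ioi_le_one t
  have hge := hS.one_le_sum_Iic_add_sum_Ioi hlohi hhi t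
  rw [hIic, hIoi, sum_empty, add_zero] at hle hge
  exact le_antisymm hle hge

end IsGreedySplit

theorem stmt_17_general (r : ℕ)
    (Tmin Tmax : Fin r → ℝ)
    (hmm : ∀ p, Tmin p ≤ Tmax p)
    (hsum_min : ∑ p, Tmin p ≤ 1) (hsum_max : 1 ≤ ∑ p, Tmax p)
    (Sstar : Fin r → ℝ)
    (hgreedy : ∀ k : Fin r,
      Sstar k = min (Tmax k)
        (1 - (∑ j ∈ Finset.univ.filter (fun j => j < k), Sstar j)
           - (∑ j ∈ Finset.univ.filter (fun j => k < j), Tmin j))) :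
    (∀ k, Tmin k ≤ Sstar k ∧ Sstar k ≤ Tmax k) ∧ ∑ k, Sstar k = 1 := by
  have hS : IsGreedySplit Tmin Tmax Sstar := fun k ↦ by
    simpa only [filter_gt_eq_Iio, filter_lt_eq_Ioi] using hgreedy k
  exact ⟨fun k ↦ ⟨hS.lo_le hmm hsum_min k, hS.le_hi k⟩, hS.sum_eq_one hmm hsum_max⟩

theorem stmt_17 (r : ℕ) (c : Fin r → ℝ) (hc : Antitone c)
    (Tmin Tmax : Fin r → ℝ)
    (h0 : ∀ p, 0 ≤ Tmin p) (hmm : ∀ p, Tmin p ≤ Tmax p)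
    (hsum_min : ∑ p, Tmin p ≤ 1) (hsum_max : 1 ≤ ∑ p, Tmax p)
    (Sstar : Fin r → ℝ)
    (hgreedy : ∀ k : Fin r,
      Sstar k = min (Tmax k)
        (1 - (∑ j ∈ Finset.univ.filter (fun j => j < k), Sstar j)
           - (∑ j ∈ Finset.univ.filter (fun j => k < j), Tmin j))) :
    (∀ k, Tmin k ≤ Sstar k ∧ Sstar k ≤ Tmax k) ∧ ∑ k, Sstar k = 1 :=
  stmt_17_general r Tmin Tmax hmm hsum_min hsum_max Sstar hgreedy
end

section
/- For every split plan S in the greedy-feasible set and every m ∈ {1,…,r}, the greedy plan S* satisfies ∑_{k=1}^m S*(p_k) ≥ ∑_{k=1}^m S(p_k). -/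
/-!
By induction on `m`, the greedy prefix sums have the closed form
`∑_{k<m} S*(k) = min (∑_{k<m} Tmax k) (1 - ∑_{k≥m} Tmin k)`: the greedy rule fills each slot as far
as its upper bound allows while reserving the lower bounds of all later slots. Every feasible `S`
satisfies both bounds on its prefix sums, the second because its suffix dominates `∑_{k≥m} Tmin k`.
-/

open Finset

theorem min_sub_min_add_min {α : Type*} [AddCommGroup α] [LinearOrder α] [IsOrderedAddMonoid α]
    {a b x z : α} (hba : b ≤ a) :
    min a (z - min x (z - b)) + min x (z - b) = min (a + x) z := by
  rcases le_total x (z - b) with h | h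
  · rw [min_eq_left h]
    rcases le_total a (z - x) with h' | h'
    · rw [min_eq_left h', min_eq_left (le_sub_iff_add_le.mp h')]
    · rw [min_eq_right h', min_eq_right (sub_le_iff_le_add.mp h'), sub_add_cancel]
  · rw [min_eq_right h, sub_sub_cancel, min_eq_right hba,
      min_eq_right ((sub_le_iff_le_add.mp h).trans (by rw [add_comm a]; gcongr))]
    abel

namespace Fin

theorem sum_filter_val_lt_add_one {M : Type*} [AddCommMonoid M] {r n : ℕ} (hn : n < r)
    (f : Fin r → M) :
    ∑ k ∈ univ.filter (fun k : Fin r => (k : ℕ) < n + 1), f k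
      = f ⟨n, hn⟩ + ∑ k ∈ univ.filter (fun k : Fin r => (k : ℕ) < n), f k := by
  rw [← sum_insert (by simp)]
  congr 1
  ext k
  simp [Fin.ext_iff]
  omega

theorem sum_filter_not_val_lt {M : Type*} [AddCommMonoid M] {r n : ℕ} (hn : n < r)
    (f : Fin r → M) :
    ∑ k ∈ univ.filter (fun k : Fin r => ¬ (k : ℕ) < n), f k
      = f ⟨n, hn⟩ + ∑ k ∈ univ.filter (fun k : Fin r => ¬ (k : ℕ) < n + 1), f k := by
  rw [← sum_insert (by simp)]
  congr 1
  ext k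
  simp [Fin.ext_iff]
  omega

end Fin

theorem sum_filter_le_min_of_bounds {ι : Type*} [Fintype ι] {Tmin Tmax S : ι → ℝ} {s : ℝ}
    (hS_sum : ∑ p, S p = s) (hS : ∀ p, Tmin p ≤ S p ∧ S p ≤ Tmax p)
    (P : ι → Prop) [DecidablePred P] :
    ∑ k ∈ univ.filter P, S k
      ≤ min (∑ k ∈ univ.filter P, Tmax k) (s - ∑ k ∈ univ.filter (fun k => ¬ P k), Tmin k) := by
  refine le_min (sum_le_sum fun k _ => (hS k).2) ?_
  have hrest : ∑ k ∈ univ.filter (fun k => ¬ P k), Tmin k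
      ≤ ∑ k ∈ univ.filter (fun k => ¬ P k), S k :=
    sum_le_sum fun k _ => (hS k).1
  rw [← hS_sum, ← sum_filter_add_sum_filter_not univ P]
  linarith

section Greedy

variable {r : ℕ} {Tmin Tmax Sstar : Fin r → ℝ} {s : ℝ}

theorem greedy_prefix_sum_eq_min (hmm : ∀ p, Tmin p ≤ Tmax p) (hsum_min : ∑ p, Tmin p ≤ s)
    (hgreedy : ∀ k : Fin r, Sstar k = min (Tmax k)
      (s - (∑ j ∈ univ.filter (fun j => j < k), Sstar j)
        - (∑ j ∈ univ.filter (fun j => k < j), Tmin j)))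
    {m : ℕ} (hm : m ≤ r) :
    ∑ k ∈ univ.filter (fun k : Fin r => (k : ℕ) < m), Sstar k
      = min (∑ k ∈ univ.filter (fun k : Fin r => (k : ℕ) < m), Tmax k)
          (s - ∑ k ∈ univ.filter (fun k : Fin r => ¬ (k : ℕ) < m), Tmin k) := by
  induction m with
  | zero => simpa using hsum_min
  | succ n ih =>
    have hn : n < r := hm
    have hbefore : univ.filter (fun j : Fin r => j < ⟨n, hn⟩)
        = univ.filter (fun k : Fin r => (k : ℕ) < n) := by
      ext; simp [Fin.lt_def]
    have hafter : univ.filter (fun j : Fin r => ⟨n, hn⟩ < j)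
        = univ.filter (fun k : Fin r => ¬ (k : ℕ) < n + 1) := by
      ext; simp [Fin.lt_def]
    rw [Fin.sum_filter_val_lt_add_one hn, Fin.sum_filter_val_lt_add_one hn, hgreedy, hbefore,
      hafter, ih hn.le, Fin.sum_filter_not_val_lt hn, sub_add_eq_sub_sub_swap, sub_right_comm s]
    exact min_sub_min_add_min (hmm _)

end Greedy

theorem stmt_18_general (r : ℕ)
    (Tmin Tmax : Fin r → ℝ)
    (hmm : ∀ p, Tmin p ≤ Tmax p)
    (hsum_min : ∑ p, Tmin p ≤ 1)
    (Sstar : Fin r → ℝ)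
    (hgreedy : ∀ k : Fin r,
      Sstar k = min (Tmax k)
        (1 - (∑ j ∈ Finset.univ.filter (fun j => j < k), Sstar j)
           - (∑ j ∈ Finset.univ.filter (fun j => k < j), Tmin j))) :
    ∀ S : Fin r → ℝ, ((∑ p, S p = 1) ∧ ∀ p, Tmin p ≤ S p ∧ S p ≤ Tmax p) →
      ∀ m : ℕ, m ≤ r →
        ∑ k ∈ Finset.univ.filter (fun k : Fin r => (k : ℕ) < m), S k ≤
        ∑ k ∈ Finset.univ.filter (fun k : Fin r => (k : ℕ) < m), Sstar k := by
  rintro S ⟨hS_sum, hS⟩ m hm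
  rw [greedy_prefix_sum_eq_min hmm hsum_min hgreedy hm]
  exact sum_filter_le_min_of_bounds hS_sum hS _

theorem stmt_18 (r : ℕ) (c : Fin r → ℝ) (hc : Antitone c)
    (Tmin Tmax : Fin r → ℝ)
    (h0 : ∀ p, 0 ≤ Tmin p) (hmm : ∀ p, Tmin p ≤ Tmax p)
    (hsum_min : ∑ p, Tmin p ≤ 1) (hsum_max : 1 ≤ ∑ p, Tmax p)
    (Sstar : Fin r → ℝ)
    (hgreedy : ∀ k : Fin r,
      Sstar k = min (Tmax k)
        (1 - (∑ j ∈ Finset.univ.filter (fun j => j < k), Sstar j)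
           - (∑ j ∈ Finset.univ.filter (fun j => k < j), Tmin j))) :
    ∀ S : Fin r → ℝ, ((∑ p, S p = 1) ∧ ∀ p, Tmin p ≤ S p ∧ S p ≤ Tmax p) →
      ∀ m : ℕ, m ≤ r →
        ∑ k ∈ Finset.univ.filter (fun k : Fin r => (k : ℕ) < m), S k ≤
        ∑ k ∈ Finset.univ.filter (fun k : Fin r => (k : ℕ) < m), Sstar k :=
  stmt_18_general r Tmin Tmax hmm hsum_min Sstar hgreedy
end
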